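/- arXiv:1505.06635 — 3 statements merged into one kernel-verified Lean document; each statement's English description precedes it below -/
import Mathlib

section
/- For every natural number n and every x ∈ ℂ (equivalently, as an identity of polynomials), K_n(x) = (1/(2(n+1))) · ( (n+1)² P_n(x)² − (x²−1) (P_n'(x))² ). -/
open Polynomial Finset

/-- The degree-`n` Legendre polynomial (over `ℂ`), defined by the Rodrigues formula
`P_n(x) = (1/(2^n n!)) dⁿ/dxⁿ (x²−1)ⁿ`. -/
noncomputable def legendre (n : ℕ) : Polynomial ℂ :=
  Polynomial.C (1 / (2 ^ n * n.factorial : ℂ)) *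
    Polynomial.derivative^[n] ((Polynomial.X ^ 2 - 1) ^ n)

/-- `P_n(z)`, the value of the degree-`n` Legendre polynomial at `z ∈ ℂ`. -/
noncomputable def P (n : ℕ) (z : ℂ) : ℂ := (legendre n).eval z

/-- `P_n'(z)`, the value of the derivative of the degree-`n` Legendre polynomial at `z ∈ ℂ`. -/
noncomputable def P' (n : ℕ) (z : ℂ) : ℂ := (Polynomial.derivative (legendre n)).eval z

/-- The normalized reciprocal Christoffel function (over `ℂ`):
`K_n(x) = (1/(n+1)) Σ_{k=0}^{n} (P_k*(x))²` where `(P_k*(x))² = ((2k+1)/2) P_k(x)²`. -/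
noncomputable def K (n : ℕ) (x : ℂ) : ℂ :=
  (1 / (n + 1)) * ∑ k ∈ Finset.range (n + 1), ((2 * k + 1) / 2 : ℂ) * (P k x) ^ 2

/-!
Differentiating the Rodrigues formula gives `P_{n+1}' = x P_n' + (n+1) P_n`, and combining this
with Legendre's differential equation `(x² - 1) P_n'' + 2x P_n' = n(n+1) P_n` gives
`(n+1) P_{n+1} = (n+1) x P_n + (x² - 1) P_n'`. By these two recurrences the right-hand side
`(n+1)² P_n² - (x² - 1) P_n'²` grows by exactly `(2n+3) P_{n+1}²` from `n` to `n + 1`, so it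
equals `∑_{k ≤ n} (2k+1) P_k²`.
-/

namespace Polynomial

variable {R : Type*} [CommRing R]

theorem derivative_X_sq_sub_one : derivative (X ^ 2 - 1 : R[X]) = C 2 * X := by
  rw [derivative_sub, derivative_X_sq, derivative_one, sub_zero]

theorem iterate_derivative_succ_X_mul (m : ℕ) (p : R[X]) :
    derivative^[m + 1] (X * p) = X * derivative^[m + 1] p + ((m : R[X]) + 1) * derivative^[m] p := by
  rw [mul_comm, iterate_derivative_mul_X, Nat.add_sub_cancel, nsmul_eq_mul]
  push_cast
  ring

theorem iterate_derivative_succ_X_sq_sub_one_mul_derivative (m : ℕ) (p : R[X]) :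
    derivative^[m + 1] ((X ^ 2 - 1) * derivative p) =
      (X ^ 2 - 1) * derivative^[m + 2] p + 2 * ((m : R[X]) + 1) * X * derivative^[m + 1] p +
        (m : R[X]) * ((m : R[X]) + 1) * derivative^[m] p := by
  induction m generalizing p with
  | zero =>
    simp only [Function.iterate_succ_apply, Function.iterate_zero_apply, derivative_mul,
      derivative_X_sq_sub_one, map_ofNat, Nat.cast_zero]
    ring
  | succ m ih =>
    have hD : derivative ((X ^ 2 - 1) * derivative p) =
        C 2 * (X * derivative p) + (X ^ 2 - 1) * derivative (derivative p) := by
      rw [derivative_mul, derivative_X_sq_sub_one]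
      ring
    rw [Function.iterate_succ_apply, hD, iterate_map_add, iterate_derivative_C_mul,
      iterate_derivative_succ_X_mul, ih]
    simp only [← Function.iterate_succ_apply, map_ofNat, Nat.succ_eq_add_one, add_assoc,
      Nat.reduceAdd]
    push_cast
    ring

theorem derivative_X_sq_sub_one_pow_succ (n : ℕ) :
    derivative ((X ^ 2 - 1 : R[X]) ^ (n + 1)) = 2 * ((n : R[X]) + 1) * X * (X ^ 2 - 1) ^ n := by
  rw [derivative_pow, derivative_X_sq_sub_one, Nat.add_sub_cancel, map_ofNat, C_eq_natCast]
  push_cast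
  ring

theorem X_sq_sub_one_mul_derivative_X_sq_sub_one_pow (n : ℕ) :
    (X ^ 2 - 1) * derivative ((X ^ 2 - 1 : R[X]) ^ n) = 2 * (n : R[X]) * X * (X ^ 2 - 1) ^ n := by
  cases n with
  | zero => simp
  | succ n =>
    rw [derivative_X_sq_sub_one_pow_succ]
    push_cast
    ring

variable (R) in
noncomputable def rodrigues (n : ℕ) : R[X] :=
  derivative^[n] ((X ^ 2 - 1) ^ n)

theorem iterate_derivative_rodrigues (k n : ℕ) :
    derivative^[k] (rodrigues R n) = derivative^[n + k] ((X ^ 2 - 1) ^ n) := by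
  rw [rodrigues, ← Function.iterate_add_apply, add_comm]

theorem derivative_rodrigues (n : ℕ) :
    derivative (rodrigues R n) = derivative^[n + 1] ((X ^ 2 - 1) ^ n) :=
  iterate_derivative_rodrigues 1 n

theorem derivative_rodrigues_succ (n : ℕ) :
    derivative (rodrigues R (n + 1)) =
      2 * ((n : R[X]) + 1) * (X * derivative (rodrigues R n) + ((n : R[X]) + 1) * rodrigues R n) := by
  rw [derivative_rodrigues, Function.iterate_succ_apply, derivative_X_sq_sub_one_pow_succ,
    show 2 * ((n : R[X]) + 1) = ((2 * (n + 1) : ℕ) : R[X]) by push_cast; ring, mul_assoc,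
    iterate_derivative_natCast_mul, iterate_derivative_succ_X_mul, derivative_rodrigues, rodrigues]

theorem legendre_equation_rodrigues (n : ℕ) :
    (X ^ 2 - 1) * derivative^[2] (rodrigues R n) + 2 * X * derivative (rodrigues R n) =
      (n : R[X]) * ((n : R[X]) + 1) * rodrigues R n := by
  have h := congrArg (derivative^[n + 1]) (X_sq_sub_one_mul_derivative_X_sq_sub_one_pow (R := R) n)
  rw [iterate_derivative_succ_X_sq_sub_one_mul_derivative,
    show 2 * (n : R[X]) = ((2 * n : ℕ) : R[X]) by push_cast; ring,
    mul_assoc ((2 * n : ℕ) : R[X]), iterate_derivative_natCast_mul,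
    iterate_derivative_succ_X_mul] at h
  rw [iterate_derivative_rodrigues, derivative_rodrigues, rodrigues]
  push_cast at h
  linear_combination h

theorem rodrigues_succ [IsDomain R] [CharZero R] (n : ℕ) :
    rodrigues R (n + 1) =
      2 * ((n : R[X]) + 1) * X * rodrigues R n + 2 * (X ^ 2 - 1) * derivative (rodrigues R n) := by
  have hs := derivative_rodrigues_succ (R := R) n
  have hs' := congrArg derivative hs
  have ode := legendre_equation_rodrigues (R := R) n
  have ode' := legendre_equation_rodrigues (R := R) (n + 1)
  simp only [derivative_mul, derivative_add, derivative_X, derivative_natCast, derivative_ofNat,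
    derivative_one] at hs'
  simp only [Function.iterate_succ_apply, Function.iterate_zero_apply] at ode ode'
  -- Times `(n+1)(n+2)`, both sides become `(X² - 1) s'' + 2X s'` for `s = rodrigues R (n + 1)`.
  have hn : ((n : R[X]) + 1) * ((n : R[X]) + 2) ≠ 0 := by
    exact_mod_cast mul_ne_zero n.succ_ne_zero (n + 1).succ_ne_zero
  refine mul_left_cancel₀ hn ?_
  push_cast at ode'
  linear_combination -ode' + (X ^ 2 - 1) * hs' + 2 * X * hs + 2 * ((n : R[X]) + 1) * X * ode

end Polynomial

theorem legendre_eq_C_mul_rodrigues (n : ℕ) :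
    legendre n = C (1 / (2 ^ n * n.factorial : ℂ)) * rodrigues ℂ n :=
  rfl

theorem legendre_zero : legendre 0 = 1 := by
  simp [legendre]

theorem one_div_two_pow_mul_factorial_succ_mul (n : ℕ) :
    1 / (2 ^ (n + 1) * (n + 1).factorial : ℂ) * (2 * ((n : ℂ) + 1)) =
      1 / (2 ^ n * n.factorial) := by
  rw [Nat.factorial_succ]
  push_cast
  field_simp
  ring

theorem derivative_legendre_succ (n : ℕ) :
    derivative (legendre (n + 1)) = X * derivative (legendre n) + ((n : ℂ[X]) + 1) * legendre n := by
  have hc := congrArg C (one_div_two_pow_mul_factorial_succ_mul n)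
  simp only [legendre_eq_C_mul_rodrigues, derivative_C_mul, derivative_rodrigues_succ, ← hc]
  simp only [map_mul, map_add, map_ofNat, map_natCast, map_one]
  ring

theorem succ_mul_legendre_succ (n : ℕ) :
    ((n : ℂ[X]) + 1) * legendre (n + 1) =
      ((n : ℂ[X]) + 1) * X * legendre n + (X ^ 2 - 1) * derivative (legendre n) := by
  have hc := congrArg C (one_div_two_pow_mul_factorial_succ_mul n)
  simp only [legendre_eq_C_mul_rodrigues, derivative_C_mul, rodrigues_succ, ← hc]
  simp only [map_mul, map_add, map_ofNat, map_natCast, map_one]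
  ring

theorem sum_two_mul_add_one_mul_legendre_sq (n : ℕ) :
    ∑ k ∈ range (n + 1), (2 * (k : ℂ[X]) + 1) * legendre k ^ 2 =
      ((n : ℂ[X]) + 1) ^ 2 * legendre n ^ 2 - (X ^ 2 - 1) * derivative (legendre n) ^ 2 := by
  induction n with
  | zero => simp [legendre_zero]
  | succ n ih =>
    rw [sum_range_succ, ih]
    have h1 := derivative_legendre_succ n
    have h2 := succ_mul_legendre_succ n
    push_cast
    linear_combination -(((n : ℂ[X]) + 1) * legendre (n + 1) + ((n : ℂ[X]) + 1) * X * legendre n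
      + (X ^ 2 - 1) * derivative (legendre n)) * h2
      + (X ^ 2 - 1) * (derivative (legendre (n + 1)) + X * derivative (legendre n)
      + ((n : ℂ[X]) + 1) * legendre n) * h1

/-- `K_n(x) = (1/(2(n+1))) ((n+1)² P_n(x)² − (x²−1) (P_n'(x))²)` for all `x ∈ ℂ`. -/
theorem christoffel_closed_form (n : ℕ) (x : ℂ) :
    K n x = (1 / (2 * (n + 1))) *
      ((n + 1) ^ 2 * (P n x) ^ 2 - (x ^ 2 - 1) * (P' n x) ^ 2) := by
  have h := congrArg (eval x) (sum_two_mul_add_one_mul_legendre_sq n)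
  simp only [eval_finsetSum, eval_mul, eval_add, eval_sub, eval_pow, eval_ofNat, eval_natCast,
    eval_one, eval_X] at h
  simp only [K, P, P', ← h, mul_sum]
  refine sum_congr rfl fun k _ => ?_
  field_simp
end

section
/- For every natural number n ≥ 1 and every nonzero complex number z, F_n(z) · F_n(1/z) = (n+1)² P_n(J(z))² − (J(z)² − 1) · (P_n'(J(z)))². -/
open Polynomial Finset

/-- The Joukowski map `J(z) = (z + 1/z)/2`. -/
noncomputable def J (z : ℂ) : ℂ := (z + 1 / z) / 2

/-- `F_n(z) = (n+1) zⁿ P_n(J(z)) + (z^{n−1}(z²−1)/2) P_n'(J(z))`. -/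
noncomputable def F (n : ℕ) (z : ℂ) : ℂ :=
  (n + 1) * z ^ (n : ℤ) * P n (J z) + z ^ ((n : ℤ) - 1) * (z ^ 2 - 1) / 2 * P' n (J z)

/-- `G_n(z) = z^{2n} F_n(1/z)`. -/
noncomputable def G (n : ℕ) (z : ℂ) : ℂ := z ^ (2 * n) * F n (1 / z)

/-!
Since `J(1/z) = J(z)` and `z^{n-1}(z² - 1) = zⁿ(z - z⁻¹)`, we have `F_n(z) = zⁿ (A + B)` and
`F_n(1/z) = z⁻ⁿ (A - B)` with `A = (n+1) P_n(J z)`, `B = ((z - z⁻¹)/2) P_n'(J z)`; the product is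
`A² - B²`, and `((z - z⁻¹)/2)² = J(z)² - 1`.
-/

theorem J_one_div (z : ℂ) : J (1 / z) = J z := by
  unfold J
  rw [one_div_one_div]
  ring

theorem J_sq_sub_one {z : ℂ} (hz : z ≠ 0) : J z ^ 2 - 1 = ((z - z⁻¹) / 2) ^ 2 := by
  unfold J
  field_simp
  ring

theorem F_eq_zpow_mul (n : ℕ) {z : ℂ} (hz : z ≠ 0) :
    F n z = z ^ (n : ℤ) * ((n + 1) * P n (J z) + (z - z⁻¹) / 2 * P' n (J z)) := by
  unfold F
  rw [zpow_sub₀ hz, zpow_one]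
  field_simp

theorem F_one_div (n : ℕ) {z : ℂ} (hz : z ≠ 0) :
    F n (1 / z) = z ^ (-(n : ℤ)) * ((n + 1) * P n (J z) - (z - z⁻¹) / 2 * P' n (J z)) := by
  rw [F_eq_zpow_mul n (one_div_ne_zero hz), J_one_div, one_div, inv_inv, inv_zpow', zpow_neg]
  ring

theorem F_mul_F_inv_general (n : ℕ) (z : ℂ) (hz : z ≠ 0) :
    F n z * F n (1 / z) =
      (n + 1) ^ 2 * (P n (J z)) ^ 2 - ((J z) ^ 2 - 1) * (P' n (J z)) ^ 2 := by
  have hcancel : z ^ (n : ℤ) * z ^ (-(n : ℤ)) = 1 := by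
    rw [← zpow_add₀ hz, add_neg_cancel, zpow_zero]
  rw [F_eq_zpow_mul n hz, F_one_div n hz, J_sq_sub_one hz]
  linear_combination ((n + 1) ^ 2 * P n (J z) ^ 2 - ((z - z⁻¹) / 2) ^ 2 * P' n (J z) ^ 2) * hcancel

/-- `F_n(z) F_n(1/z) = (n+1)² P_n(J(z))² − (J(z)² − 1) (P_n'(J(z)))²` for `n ≥ 1`, `z ≠ 0`. -/
theorem F_mul_F_inv (n : ℕ) (hn : 1 ≤ n) (z : ℂ) (hz : z ≠ 0) :
    F n z * F n (1 / z) =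
      (n + 1) ^ 2 * (P n (J z)) ^ 2 - ((J z) ^ 2 - 1) * (P' n (J z)) ^ 2 :=
  F_mul_F_inv_general n z hz
end

section
/- For every natural number n ≥ 1, every zero z of the polynomial F_n satisfies |z| < 1; that is, all 2n zeros of F_n lie in the open unit disk of ℂ. -/
open Polynomial Finset

/-!
With `Q(z) = zⁿ Pₙ(J z)` one has `Fₙ = (z Q)'`. Rolle's theorem applied to the Rodrigues formula
shows that `Pₙ` has `n` simple zeros `tⱼ ∈ (-1, 1)`; since `(z - w)(z - w⁻¹) = 2z (J z - J w)`,
`Q` has the `2n` distinct zeros `e^{± i arccos tⱼ}`, all on the unit circle. Hence the zeros of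
`z Q` lie in the closed unit disk, and those on the circle are simple. For such a polynomial `R`,
a zero `z` of `R'` with `|z| ≥ 1` cannot be a zero of `R` (it would be a multiple zero on the
circle), and otherwise `z R'(z) / R(z) = Σ z / (z - w)`, summed over the zeros `w` of `R`, would
vanish although every term has real part at least `1/2`.
-/

theorem iterate_derivative_ne_zero {R : Type*} [CommRing R] [IsDomain R] [CharZero R]
    {p : R[X]} (hp : p ≠ 0) {k : ℕ} (hk : k ≤ p.natDegree) : derivative^[k] p ≠ 0 := by
  intro h
  have hcoeff := congrArg (coeff · (p.natDegree - k)) h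
  simp [coeff_iterate_derivative, Nat.sub_add_cancel hk, hp,
    Nat.descFactorial_eq_zero_iff_lt] at hcoeff
  omega

theorem eq_C_leadingCoeff_mul_prod_of_natDegree_le_card {R : Type*} [CommRing R] [IsDomain R]
    {p : R[X]} (hp : p ≠ 0) {S : Finset R} (hS : ∀ t ∈ S, p.IsRoot t)
    (hdeg : p.natDegree ≤ S.card) : p = C p.leadingCoeff * ∏ t ∈ S, (X - C t) := by
  have hle : S.val ≤ p.roots :=
    (Multiset.le_iff_subset S.nodup).2 fun t ht => (mem_roots hp).2 (hS t ht)
  have hcard : Multiset.card p.roots ≤ S.card := (card_roots' p).trans hdeg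
  have hroots : S.val = p.roots := Multiset.eq_of_le_of_card_le hle hcard
  have hdeg' : Multiset.card p.roots = p.natDegree :=
    le_antisymm (card_roots' p) (hroots ▸ hdeg)
  conv_lhs => rw [← C_leadingCoeff_mul_prod_multiset_X_sub_C hdeg', ← hroots]
  rfl

theorem card_le_card_roots_derivative_Ioo {p : ℝ[X]} (hp : derivative p ≠ 0) {a b : ℝ}
    {s : Finset ℝ} (hs : ∀ x ∈ s, p.IsRoot x ∧ x ∈ Set.Icc a b) :
    s.card ≤ ((derivative p).roots.toFinset.filter (· ∈ Set.Ioo a b)).card + 1 := by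
  refine Finset.card_le_of_interleaved fun x hx y hy hxy _ => ?_
  obtain ⟨z, hz, hz'⟩ := exists_deriv_eq_zero hxy p.continuousOn
    ((hs x hx).1.eq_zero.trans (hs y hy).1.eq_zero.symm)
  refine ⟨z, ?_, hz⟩
  rw [Finset.mem_filter, Multiset.mem_toFinset, mem_roots hp, IsRoot, ← p.deriv]
  exact ⟨hz', (hs x hx).2.1.trans_lt hz.1, hz.2.trans_le (hs y hy).2.2⟩

theorem natDegree_X_sq_sub_one_pow (n : ℕ) : ((X ^ 2 - 1) ^ n : ℝ[X]).natDegree = 2 * n := by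
  rw [natDegree_pow, ← C_1, natDegree_X_pow_sub_C, mul_comm]

theorem iterate_derivative_X_sq_sub_one_pow_ne_zero {n k : ℕ} (hk : k ≤ 2 * n) :
    derivative^[k] ((X ^ 2 - 1) ^ n : ℝ[X]) ≠ 0 :=
  iterate_derivative_ne_zero (by simpa using pow_ne_zero n (X_pow_sub_C_ne_zero two_pos (1 : ℝ)))
    (natDegree_X_sq_sub_one_pow n ▸ hk)

theorem le_card_roots_Ioo_iterate_derivative_X_sq_sub_one_pow {n k : ℕ} (hk : k ≤ n) :
    k ≤ ((derivative^[k] ((X ^ 2 - 1) ^ n : ℝ[X])).roots.toFinset.filter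
      (· ∈ Set.Ioo (-1 : ℝ) 1)).card := by
  induction k with
  | zero => exact Nat.zero_le _
  | succ k ih =>
    set D := derivative^[k] ((X ^ 2 - 1) ^ n : ℝ[X])
    set T := D.roots.toFinset.filter (· ∈ Set.Ioo (-1 : ℝ) 1) with hT
    have hD : derivative D ≠ 0 := by
      rw [← Function.iterate_succ_apply' derivative]
      exact iterate_derivative_X_sq_sub_one_pow_ne_zero (by omega)
    -- `±1` are zeros of multiplicity `n - k` of `D`
    have hends : ∀ x : ℝ, x ^ 2 - 1 = 0 → D.IsRoot x := by
      intro x hx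
      obtain ⟨q, hq⟩ := pow_sub_dvd_iterate_derivative_pow (X ^ 2 - 1 : ℝ[X]) n k
      simp [D, IsRoot, hq, hx, Nat.sub_ne_zero_of_lt hk]
    have hs : ∀ x ∈ insert (-1) (insert 1 T), D.IsRoot x ∧ x ∈ Set.Icc (-1 : ℝ) 1 := by
      simp only [hT, Finset.mem_insert, Finset.mem_filter, Multiset.mem_toFinset]
      rintro x (rfl | rfl | ⟨hx, hx'⟩)
      · exact ⟨hends _ (by norm_num), by norm_num⟩
      · exact ⟨hends _ (by norm_num), by norm_num⟩
      · exact ⟨(mem_roots'.1 hx).2, Set.Ioo_subset_Icc_self hx'⟩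
    have hcard := card_le_card_roots_derivative_Ioo hD hs
    rw [Finset.card_insert_of_notMem (by norm_num [T]),
      Finset.card_insert_of_notMem (by simp [T])] at hcard
    rw [Function.iterate_succ_apply']
    change k + 1 ≤ ((derivative D).roots.toFinset.filter (· ∈ Set.Ioo (-1 : ℝ) 1)).card
    have := ih (by omega)
    omega

theorem legendre_eq_C_mul_prod (n : ℕ) : ∃ c : ℂ, c ≠ 0 ∧ ∃ S : Finset ℝ, S.card = n ∧
    (∀ t ∈ S, t ∈ Set.Ioo (-1 : ℝ) 1) ∧ legendre n = C c * ∏ t ∈ S, (X - C (t : ℂ)) := by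
  set D := derivative^[n] ((X ^ 2 - 1) ^ n : ℝ[X])
  set S := D.roots.toFinset.filter (· ∈ Set.Ioo (-1 : ℝ) 1)
  have hdeg : D.natDegree ≤ n := (natDegree_iterate_derivative _ n).trans
    (by rw [natDegree_X_sq_sub_one_pow]; omega)
  have hD : D ≠ 0 := iterate_derivative_X_sq_sub_one_pow_ne_zero (by omega)
  have hcard : n ≤ S.card := le_card_roots_Ioo_iterate_derivative_X_sq_sub_one_pow le_rfl
  have hroots : ∀ t ∈ S, D.IsRoot t := fun t ht =>
    (mem_roots'.1 (Multiset.mem_toFinset.1 (Finset.mem_filter.1 ht).1)).2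
  obtain ⟨a, ha, hfactor⟩ : ∃ a, a ≠ 0 ∧ D = C a * ∏ t ∈ S, (X - C t) :=
    ⟨_, leadingCoeff_ne_zero.2 hD,
      eq_C_leadingCoeff_mul_prod_of_natDegree_le_card hD hroots (hdeg.trans hcard)⟩
  refine ⟨(1 / (2 ^ n * n.factorial) : ℂ) * a, ?_, S, ?_,
    fun t ht => (Finset.mem_filter.1 ht).2, ?_⟩
  · simp [ha, Nat.factorial_ne_zero]
  · exact le_antisymm ((Finset.card_filter_le _ _).trans
      ((Multiset.toFinset_card_le _).trans (card_roots' D))|>.trans hdeg) hcard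
  · have hmap : derivative^[n] ((X ^ 2 - 1) ^ n : ℂ[X]) = D.map (algebraMap ℝ ℂ) := by
      simp [D, ← iterate_derivative_map]
    rw [legendre, hmap, hfactor]
    simp [Polynomial.map_prod, mul_assoc]

theorem J_inv (w : ℂ) : J w⁻¹ = J w := by
  simp [J, add_comm]

theorem sub_mul_sub_inv_eq {z w : ℂ} (hz : z ≠ 0) (hw : w ≠ 0) :
    (z - w) * (z - w⁻¹) = 2 * z * (J z - J w) := by
  simp only [J]
  field_simp
  ring

theorem J_exp_mul_I (θ : ℝ) : J (Complex.exp (θ * Complex.I)) = Real.cos θ := by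
  rw [J, one_div, ← Complex.exp_neg, ← neg_mul, Complex.ofReal_cos, ← Complex.two_cos]
  ring

theorem exists_finset_norm_eq_one_prod_sub_eq {S : Finset ℝ}
    (hS : ∀ t ∈ S, t ∈ Set.Ioo (-1 : ℝ) 1) :
    ∃ W : Finset ℂ, (∀ x ∈ W, ‖x‖ = 1) ∧
      ∀ z : ℂ, z ≠ 0 → ∏ x ∈ W, (z - x) = (2 * z) ^ S.card * ∏ t ∈ S, (J z - t) := by
  set w : ℝ → ℂ := fun t => Complex.exp (Real.arccos t * Complex.I)
  have hnorm (t : ℝ) : ‖w t‖ = 1 := Complex.norm_exp_ofReal_mul_I _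
  have hw0 (t : ℝ) : w t ≠ 0 := Complex.exp_ne_zero _
  have hJw : ∀ t ∈ S, J (w t) = t := fun t ht => by
    rw [J_exp_mul_I, Real.cos_arccos (hS t ht).1.le (hS t ht).2.le]
  have hne : ∀ t ∈ S, w t ≠ (w t)⁻¹ := by
    intro t ht h
    have hsq : w t * w t = 1 := by rw [← mul_inv_cancel₀ (hw0 t), ← h]
    have ht' : (t : ℂ) = 1 ∨ (t : ℂ) = -1 := by
      rcases mul_self_eq_one_iff.1 hsq with h1 | h1 <;> [left; right] <;>
        rw [← hJw t ht, h1] <;> norm_num [J]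
    obtain ⟨h₁, h₂⟩ := hS t ht
    rcases ht' with ht' | ht'
    · linarith [show t = 1 by exact_mod_cast ht']
    · linarith [show t = -1 by exact_mod_cast ht']
  have hJpair : ∀ t ∈ S, ∀ x ∈ ({w t, (w t)⁻¹} : Finset ℂ), J x = t := by
    intro t ht x hx
    rcases Finset.mem_insert.1 hx with rfl | hx
    · exact hJw t ht
    · rw [Finset.mem_singleton.1 hx, J_inv, hJw t ht]
  refine ⟨S.biUnion fun t => {w t, (w t)⁻¹}, ?_, fun z hz => ?_⟩
  · simp only [Finset.mem_biUnion, Finset.mem_insert, Finset.mem_singleton]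
    rintro x ⟨t, -, rfl | rfl⟩ <;> simp [hnorm]
  · have hdisj : (S : Set ℝ).PairwiseDisjoint fun t => ({w t, (w t)⁻¹} : Finset ℂ) :=
      fun t ht t' ht' htt' => Finset.disjoint_left.2 fun x hx hx' => htt' <| by
        exact_mod_cast (hJpair t ht x hx).symm.trans (hJpair t' ht' x hx')
    rw [Finset.prod_biUnion hdisj, ← Finset.prod_const, ← Finset.prod_mul_distrib]
    refine Finset.prod_congr rfl fun t ht => ?_
    rw [Finset.prod_pair (hne t ht), sub_mul_sub_inv_eq hz (hw0 t), hJw t ht]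

theorem hasDerivAt_J {z : ℂ} (hz : z ≠ 0) : HasDerivAt J ((1 - (z ^ 2)⁻¹) / 2) z := by
  refine ((((hasDerivAt_id' z).add (hasDerivAt_inv hz)).div_const 2).congr_deriv
    (by ring)).congr_of_eventuallyEq (.of_forall fun w => ?_)
  simp [J]

theorem hasDerivAt_zpow_mul_P_J (n : ℕ) {z : ℂ} (hz : z ≠ 0) :
    HasDerivAt (fun w => w ^ ((n : ℤ) + 1) * P n (J w)) (F n z) z := by
  have hP : HasDerivAt (fun w => P n (J w)) (P' n (J z) * ((1 - (z ^ 2)⁻¹) / 2)) z :=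
    ((legendre n).hasDerivAt (J z)).comp z (hasDerivAt_J hz)
  refine ((hasDerivAt_zpow ((n : ℤ) + 1) z (Or.inl hz)).mul hP).congr_deriv ?_
  rw [F, add_sub_cancel_right, zpow_add_one₀ hz, zpow_sub_one₀ hz]
  push_cast
  field_simp

theorem eq_derivative_X_mul_of_eval_eq {n : ℕ} {Q Fpoly : ℂ[X]}
    (hQ : ∀ z : ℂ, z ≠ 0 → Q.eval z = z ^ n * P n (J z))
    (hF : ∀ z : ℂ, z ≠ 0 → Fpoly.eval z = F n z) : Fpoly = derivative (X * Q) := by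
  refine eq_of_infinite_eval_eq _ _ ((Set.finite_singleton 0).infinite_compl.mono fun z hz => ?_)
  have hz : z ≠ 0 := hz
  have hXQ : (fun w => (X * Q).eval w) =ᶠ[nhds z] fun w => w ^ ((n : ℤ) + 1) * P n (J w) := by
    filter_upwards [isOpen_ne.mem_nhds hz] with w hw
    rw [eval_mul, eval_X, hQ w hw, zpow_add_one₀ hw, zpow_natCast]
    ring
  rw [Set.mem_ofPred_eq, hF z hz]
  exact ((hasDerivAt_zpow_mul_P_J n hz).congr_of_eventuallyEq hXQ).unique ((X * Q).hasDerivAt z)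

theorem one_half_le_re_div_sub {z x : ℂ} (hxz : ‖x‖ ≤ ‖z‖) (hne : z ≠ x) :
    1 / 2 ≤ (z / (z - x)).re := by
  have hsq : Complex.normSq x ≤ Complex.normSq z := by
    rw [Complex.normSq_eq_norm_sq, Complex.normSq_eq_norm_sq]
    gcongr
  have hpos : 0 < Complex.normSq (z - x) := Complex.normSq_pos.2 (sub_ne_zero.2 hne)
  rw [Complex.div_re, ← add_div, le_div_iff₀ hpos]
  simp only [Complex.normSq_apply, Complex.sub_re, Complex.sub_im] at hsq ⊢
  linarith

theorem norm_lt_one_of_isRoot_derivative {P : ℂ[X]} (hP : 0 < P.degree)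
    (hroots : ∀ x ∈ P.roots, ‖x‖ ≤ 1)
    (hsimple : ∀ x ∈ P.roots, ‖x‖ = 1 → P.rootMultiplicity x = 1) {z : ℂ}
    (hz : (derivative P).IsRoot z) : ‖z‖ < 1 := by
  have hP0 : P ≠ 0 := ne_zero_of_degree_gt hP
  by_contra! hz1
  by_cases hPz : P.IsRoot z
  · have hmem : z ∈ P.roots := (mem_roots hP0).2 hPz
    have hmult := (one_lt_rootMultiplicity_iff_isRoot hP0).2 ⟨hPz, hz⟩
    rw [hsimple z hmem (le_antisymm (hroots z hmem) hz1)] at hmult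
    exact lt_irrefl 1 hmult
  · have hlog : (P.roots.map fun x => z / (z - x)).sum = 0 := by
      simp_rw [div_eq_mul_one_div z, Multiset.sum_map_mul_left,
        ← (IsAlgClosed.splits P).eval_derivative_div_eval_of_ne_zero hPz, hz.eq_zero,
        zero_div, mul_zero]
    have hcard : 0 < Multiset.card P.roots := Multiset.card_pos.2
      ((IsAlgClosed.splits P).roots_ne_zero (natDegree_pos_iff_degree_pos.2 hP).ne')
    have hre : Multiset.card P.roots • (1 / 2 : ℝ) ≤ (P.roots.map fun x => z / (z - x)).sum.re := by
      have hsum := map_multiset_sum Complex.reAddGroupHom (P.roots.map fun x => z / (z - x))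
      rw [Complex.coe_reAddGroupHom, Multiset.map_map] at hsum
      rw [hsum, ← Multiset.card_map (fun x => (z / (z - x)).re)]
      refine Multiset.card_nsmul_le_sum fun r hr => ?_
      obtain ⟨x, hx, rfl⟩ := Multiset.mem_map.1 hr
      exact one_half_le_re_div_sub ((hroots x hx).trans hz1)
        fun hzx => hPz (hzx ▸ (mem_roots hP0).1 hx)
    rw [hlog, Complex.zero_re] at hre
    have : (0 : ℝ) < Multiset.card P.roots • (1 / 2 : ℝ) := by positivity
    linarith

theorem norm_lt_one_of_isRoot_derivative_X_mul_prod {a : ℂ} (ha : a ≠ 0) {W : Finset ℂ}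
    (hW : ∀ x ∈ W, ‖x‖ = 1) {z : ℂ}
    (hz : (derivative (X * (C a * ∏ x ∈ W, (X - C x)))).IsRoot z) : ‖z‖ < 1 := by
  set P := X * (C a * ∏ x ∈ W, (X - C x))
  have hP0 : P ≠ 0 := mul_ne_zero X_ne_zero
    (mul_ne_zero (C_ne_zero.2 ha) (monic_prod_of_monic _ _ fun x _ => monic_X_sub_C x).ne_zero)
  have hroots : P.roots = 0 ::ₘ W.val := by
    rw [roots_mul hP0, roots_X, roots_C_mul _ ha, roots_prod_X_sub_C]
    rfl
  have hnodup : P.roots.Nodup :=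
    hroots ▸ Multiset.nodup_cons.2 ⟨fun h => by simpa using hW 0 h, W.nodup⟩
  refine norm_lt_one_of_isRoot_derivative (degree_pos_of_root (a := 0) hP0 (by simp [P]))
    (fun x hx => ?_) (fun x hx _ => ?_) hz
  · rcases Multiset.mem_cons.1 (hroots ▸ hx) with rfl | hx
    · simp
    · exact (hW x hx).le
  · rw [← count_roots]
    exact Multiset.count_eq_one_of_mem hnodup hx

theorem F_zeros_in_open_unit_disk_general (n : ℕ) (Fpoly : Polynomial ℂ)
    (hFpoly : ∀ z : ℂ, z ≠ 0 → Fpoly.eval z = F n z) :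
    ∀ z : ℂ, Fpoly.eval z = 0 → ‖z‖ < 1 := by
  obtain ⟨c, hc, S, hcard, hS, hP⟩ := legendre_eq_C_mul_prod n
  obtain ⟨W, hW, hprod⟩ := exists_finset_norm_eq_one_prod_sub_eq hS
  have hQ : ∀ z : ℂ, z ≠ 0 →
      (C (c / 2 ^ n) * ∏ x ∈ W, (X - C x)).eval z = z ^ n * P n (J z) := by
    intro z hz
    simp only [eval_mul, eval_C, eval_prod, eval_sub, eval_X, hprod z hz, P, hP, hcard]
    field_simp
    ring
  intro z hz
  rw [eq_derivative_X_mul_of_eval_eq hQ hFpoly] at hz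
  exact norm_lt_one_of_isRoot_derivative_X_mul_prod (by simpa using hc) hW hz

/-- All zeros of the polynomial `F_n` (`n ≥ 1`) lie in the open unit disk. -/
theorem F_zeros_in_open_unit_disk (n : ℕ) (hn : 1 ≤ n) (Fpoly : Polynomial ℂ)
    (hFpoly : ∀ z : ℂ, z ≠ 0 → Fpoly.eval z = F n z) :
    ∀ z : ℂ, Fpoly.eval z = 0 → ‖z‖ < 1 :=
  F_zeros_in_open_unit_disk_general n Fpoly hFpoly
end
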